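/- arXiv:2301.09385 — 2 statements merged into one kernel-verified Lean document; each statement's English description precedes it below -/
import Mathlib

section
/- Let n ≥ 1 and m ≥ 1 be integers, let x_1 ≤ x_2 ≤ ⋯ ≤ x_n be real numbers with x_j ≥ 1 for all j, and let a > 0. Define φ_n(t) = (1/n) Σ_{j=1}^n exp(i t x_j^(1/m)) and ξ_n(t) = Σ_{j=1}^n v_{j,m} exp(i t x_j), where v_{j,m} = n^(−m)[(n − j + 1)^m − (n − j)^m]. Then n · ∫_{−∞}^{∞} |φ_n(t) − ξ_n(t)|² e^(−a|t|) dt = (1/n) Σ_{j=1}^n Σ_{k=1}^n [ 2a/(a² + (x_j^(1/m) − x_k^(1/m))²) − n v_{j,m} · 4a/(a² + (x_j − x_k^(1/m))²) + n² v_{j,m} v_{k,m} · 2a/(a² + (x_j − x_k)²) ]. -/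
/-!
Expanding `‖∑ wᵢ e^{itαᵢ}‖² = ∑ᵢ ∑ₖ wᵢ wₖ e^{it(αᵢ - αₖ)}` reduces the integral to the Fourier
transform of the Laplace weight, `∫ e^{itc} e^{-a|t|} dt = 1/(a - ic) + 1/(a + ic) = 2a/(a² + c²)`,
and `φₙ - ξₙ` is a signed combination of exponentials at the points `x_j^{1/m}` and `x_j`.
-/

/-- The weight `v_{j,m} = n⁻ᵐ ((n - j + 1)^m - (n - j)^m)`. -/
noncomputable def vWeight (n m j : ℕ) : ℝ :=
  (((n - j + 1 : ℕ) : ℝ) ^ m - ((n - j : ℕ) : ℝ) ^ m) / (n : ℝ) ^ m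

/-- The empirical characteristic function of the transformed data `x j ^ (1/m)`. -/
noncomputable def phiEmp (n m : ℕ) (x : ℕ → ℝ) (t : ℝ) : ℂ :=
  (n : ℂ)⁻¹ * ∑ j ∈ Finset.Icc 1 n,
    Complex.exp (Complex.I * (t : ℂ) * ((x j ^ ((m : ℝ)⁻¹) : ℝ) : ℂ))

/-- The V-empirical characteristic function of the minimum of `m` sample values, expressed
as a single weighted sum. -/
noncomputable def xiEmp (n m : ℕ) (x : ℕ → ℝ) (t : ℝ) : ℂ :=
  ∑ j ∈ Finset.Icc 1 n, ((vWeight n m j : ℝ) : ℂ) * Complex.exp (Complex.I * (t : ℂ) * (x j : ℂ))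

open MeasureTheory Set Complex

lemma exp_I_mul_mul_exp_neg_abs_eqOn_Ioi (a c : ℝ) :
    EqOn (fun t : ℝ => cexp (I * t * c) * Real.exp (-a * |t|))
      (fun t : ℝ => cexp ((-a + c * I) * t)) (Ioi 0) := by
  intro t ht
  simp only [abs_of_pos (mem_Ioi.mp ht), ofReal_exp, ← Complex.exp_add]
  push_cast
  ring_nf

lemma exp_I_mul_mul_exp_neg_abs_eqOn_Iic (a c : ℝ) :
    EqOn (fun t : ℝ => cexp (I * t * c) * Real.exp (-a * |t|))
      (fun t : ℝ => cexp ((a + c * I) * t)) (Iic 0) := by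
  intro t ht
  simp only [abs_of_nonpos (mem_Iic.mp ht), ofReal_exp, ← Complex.exp_add]
  push_cast
  ring_nf

theorem integrable_exp_I_mul_mul_exp_neg_abs {a : ℝ} (ha : 0 < a) (c : ℝ) :
    Integrable fun t : ℝ => cexp (I * t * c) * Real.exp (-a * |t|) := by
  have hIic := (integrableOn_exp_mul_complex_Iic (a := a + c * I) (by simpa) 0).congr_fun
    (exp_I_mul_mul_exp_neg_abs_eqOn_Iic a c).symm measurableSet_Iic
  have hIoi := (integrableOn_exp_mul_complex_Ioi (a := -a + c * I) (by simpa) 0).congr_fun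
    (exp_I_mul_mul_exp_neg_abs_eqOn_Ioi a c).symm measurableSet_Ioi
  simpa using hIic.union hIoi

theorem integral_exp_I_mul_mul_exp_neg_abs {a : ℝ} (ha : 0 < a) (c : ℝ) :
    ∫ t : ℝ, cexp (I * t * c) * Real.exp (-a * |t|) = ((2 * a / (a ^ 2 + c ^ 2) : ℝ) : ℂ) := by
  rw [← integral_add_compl measurableSet_Ioi (integrable_exp_I_mul_mul_exp_neg_abs ha c),
    compl_Ioi, setIntegral_congr_fun measurableSet_Ioi (exp_I_mul_mul_exp_neg_abs_eqOn_Ioi a c),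
    setIntegral_congr_fun measurableSet_Iic (exp_I_mul_mul_exp_neg_abs_eqOn_Iic a c),
    integral_exp_mul_complex_Ioi (by simpa) 0, integral_exp_mul_complex_Iic (by simpa) 0]
  have h1 : (-a + c * I : ℂ) ≠ 0 := fun h => by simpa [ha.ne'] using congrArg re h
  have h2 : (a + c * I : ℂ) ≠ 0 := fun h => by simpa [ha.ne'] using congrArg re h
  have h3 : ((a : ℂ) ^ 2 + c ^ 2) ≠ 0 := by exact_mod_cast (by positivity : a ^ 2 + c ^ 2 ≠ 0)
  push_cast
  field_simp
  ring_nf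
  simp [I_sq]

theorem sq_norm_sum_exp_I_mul {ι : Type*} (s : Finset ι) (w α : ι → ℝ) (t : ℝ) :
    ((‖∑ i ∈ s, (w i : ℂ) * cexp (I * t * α i)‖ ^ 2 : ℝ) : ℂ)
      = ∑ i ∈ s, ∑ k ∈ s, ((w i * w k : ℝ) : ℂ) * cexp (I * t * ((α i - α k : ℝ) : ℂ)) := by
  rw [ofReal_pow, ← mul_conj', map_sum, Finset.sum_mul_sum]
  refine Finset.sum_congr rfl fun i _ => Finset.sum_congr rfl fun k _ => ?_
  simp only [map_mul, conj_ofReal, ← Complex.exp_conj, conj_I]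
  rw [mul_mul_mul_comm, ← Complex.exp_add]
  push_cast
  ring_nf

theorem integral_sq_norm_sum_exp_I_mul_mul_exp_neg_abs {ι : Type*} {a : ℝ} (ha : 0 < a)
    (s : Finset ι) (w α : ι → ℝ) :
    ∫ t : ℝ, ‖∑ i ∈ s, (w i : ℂ) * cexp (I * t * α i)‖ ^ 2 * Real.exp (-a * |t|)
      = ∑ i ∈ s, ∑ k ∈ s, w i * w k * (2 * a / (a ^ 2 + (α i - α k) ^ 2)) := by
  have hpoint : ∀ t : ℝ,
      ((‖∑ i ∈ s, (w i : ℂ) * cexp (I * t * α i)‖ ^ 2 * Real.exp (-a * |t|) : ℝ) : ℂ)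
        = ∑ i ∈ s, ∑ k ∈ s, ((w i * w k : ℝ) : ℂ) *
            (cexp (I * t * ((α i - α k : ℝ) : ℂ)) * Real.exp (-a * |t|)) := by
    intro t
    rw [ofReal_mul, sq_norm_sum_exp_I_mul, Finset.sum_mul]
    simp only [Finset.sum_mul, mul_assoc]
  apply ofReal_injective
  rw [← integral_complex_ofReal]
  simp only [hpoint]
  rw [integral_finsetSum _ fun i _ => integrable_finsetSum _ fun k _ =>
    (integrable_exp_I_mul_mul_exp_neg_abs ha _).const_mul _, ofReal_sum]
  refine Finset.sum_congr rfl fun i _ => ?_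
  rw [integral_finsetSum _ fun k _ => (integrable_exp_I_mul_mul_exp_neg_abs ha _).const_mul _,
    ofReal_sum]
  refine Finset.sum_congr rfl fun k _ => ?_
  rw [integral_const_mul, integral_exp_I_mul_mul_exp_neg_abs ha]
  push_cast
  ring

theorem integral_sq_norm_sum_sub_sum_exp_I_mul_mul_exp_neg_abs {ι : Type*} {a : ℝ} (ha : 0 < a)
    (s : Finset ι) (p α q β : ι → ℝ) :
    ∫ t : ℝ, ‖∑ i ∈ s, (p i : ℂ) * cexp (I * t * α i) - ∑ i ∈ s, (q i : ℂ) * cexp (I * t * β i)‖ ^ 2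
        * Real.exp (-a * |t|)
      = ∑ j ∈ s, ∑ k ∈ s, (p j * p k * (2 * a / (a ^ 2 + (α j - α k) ^ 2))
          - 2 * q j * p k * (2 * a / (a ^ 2 + (β j - α k) ^ 2))
          + q j * q k * (2 * a / (a ^ 2 + (β j - β k) ^ 2))) := by
  have hdiff : ∀ t : ℝ,
      ∑ i ∈ s, (p i : ℂ) * cexp (I * t * α i) - ∑ i ∈ s, (q i : ℂ) * cexp (I * t * β i)
        = ∑ i ∈ s.disjSum s,
            ((Sum.elim p (-q) i : ℝ) : ℂ) * cexp (I * t * (Sum.elim α β i : ℝ)) := by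
    intro t
    simp [Finset.sum_disjSum, sub_eq_add_neg]
  have hcross : ∑ j ∈ s, ∑ k ∈ s, p j * -q k * (2 * a / (a ^ 2 + (α j - β k) ^ 2))
      = ∑ j ∈ s, ∑ k ∈ s, -q j * p k * (2 * a / (a ^ 2 + (β j - α k) ^ 2)) := by
    rw [Finset.sum_comm]
    refine Finset.sum_congr rfl fun j _ => Finset.sum_congr rfl fun k _ => ?_
    ring
  simp only [hdiff]
  rw [integral_sq_norm_sum_exp_I_mul_mul_exp_neg_abs ha]
  simp only [Finset.sum_disjSum, Sum.elim_inl, Sum.elim_inr, Pi.neg_apply]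
  rw [Finset.sum_add_distrib, hcross]
  simp only [← Finset.sum_add_distrib]
  refine Finset.sum_congr rfl fun j _ => Finset.sum_congr rfl fun k _ => ?_
  ring

theorem vStatistic_laplace_eq_general (n m : ℕ) (x : ℕ → ℝ) (a : ℝ) (ha : 0 < a) :
    (n : ℝ) * ∫ t : ℝ, ‖phiEmp n m x t - xiEmp n m x t‖ ^ 2 * Real.exp (-a * |t|)
      = (n : ℝ)⁻¹ * ∑ j ∈ Finset.Icc 1 n, ∑ k ∈ Finset.Icc 1 n,
          (2 * a / (a ^ 2 + (x j ^ ((m : ℝ)⁻¹) - x k ^ ((m : ℝ)⁻¹)) ^ 2)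
            - (n : ℝ) * vWeight n m j * (4 * a / (a ^ 2 + (x j - x k ^ ((m : ℝ)⁻¹)) ^ 2))
            + (n : ℝ) ^ 2 * vWeight n m j * vWeight n m k *
                (2 * a / (a ^ 2 + (x j - x k) ^ 2))) := by
  obtain rfl | hn := n.eq_zero_or_pos
  · simp
  have hdiff : ∀ t : ℝ, phiEmp n m x t - xiEmp n m x t
      = ∑ j ∈ Finset.Icc 1 n, (((n : ℝ)⁻¹ : ℝ) : ℂ) * cexp (I * t * (x j ^ ((m : ℝ)⁻¹) : ℝ))
        - ∑ j ∈ Finset.Icc 1 n, (vWeight n m j : ℂ) * cexp (I * t * x j) := by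
    intro t
    rw [phiEmp, xiEmp, Finset.mul_sum]
    push_cast
    rfl
  simp only [hdiff, integral_sq_norm_sum_sub_sum_exp_I_mul_mul_exp_neg_abs ha, Finset.mul_sum]
  refine Finset.sum_congr rfl fun j _ => Finset.sum_congr rfl fun k _ => ?_
  field_simp
  ring

/-- Computational form of the V-statistic `S_{n,m,a}` with the Laplace kernel weight
`w_a(t) = exp (-a |t|)`. -/
theorem vStatistic_laplace_eq (n m : ℕ) (hn : 1 ≤ n) (hm : 1 ≤ m) (x : ℕ → ℝ)
    (hmono : ∀ j k, 1 ≤ j → j ≤ k → k ≤ n → x j ≤ x k)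
    (hx : ∀ j, 1 ≤ j → j ≤ n → 1 ≤ x j) (a : ℝ) (ha : 0 < a) :
    (n : ℝ) * ∫ t : ℝ, ‖phiEmp n m x t - xiEmp n m x t‖ ^ 2 * Real.exp (-a * |t|)
      = (n : ℝ)⁻¹ * ∑ j ∈ Finset.Icc 1 n, ∑ k ∈ Finset.Icc 1 n,
          (2 * a / (a ^ 2 + (x j ^ ((m : ℝ)⁻¹) - x k ^ ((m : ℝ)⁻¹)) ^ 2)
            - (n : ℝ) * vWeight n m j * (4 * a / (a ^ 2 + (x j - x k ^ ((m : ℝ)⁻¹)) ^ 2))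
            + (n : ℝ) ^ 2 * vWeight n m j * vWeight n m k *
                (2 * a / (a ^ 2 + (x j - x k) ^ 2))) :=
  vStatistic_laplace_eq_general n m x a ha
end

section
/- Let n ≥ 1 and m ≥ 1 be integers, let x_1 ≤ x_2 ≤ ⋯ ≤ x_n be real numbers with x_j ≥ 1 for all j, and let a > 0. Define φ_n(t) = (1/n) Σ_{j=1}^n exp(i t x_j^(1/m)) and ξ_n(t) = Σ_{j=1}^n v_{j,m} exp(i t x_j), where v_{j,m} = n^(−m)[(n − j + 1)^m − (n − j)^m]. Then n · ∫_{−∞}^{∞} |φ_n(t) − ξ_n(t)|² e^(−a t²) dt = (1/n) √(π/a) Σ_{j=1}^n Σ_{k=1}^n [ exp(−(x_j^(1/m) − x_k^(1/m))²/(4a)) − 2 n v_{j,m} exp(−(x_j − x_k^(1/m))²/(4a)) + n² v_{j,m} v_{k,m} exp(−(x_j − x_k)²/(4a)) ]. -/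
/-!
`φ_n - ξ_n` is a single trigonometric sum `n⁻¹ ∑_p c_p e^{i t y_p}` over two copies of the index
set: frequencies `x_j^(1/m)` with coefficient `1` and `x_j` with coefficient `-n v_{j,m}`. Its
squared modulus is `∑_{p,q} c_p c_q cos (t (y_p - y_q))`, and each cosine integrates against the
Gaussian to `√(π/a) exp (-(y_p - y_q)² / (4a))`, the Fourier transform of `e^{-a t²}`. The kernel
is symmetric in `p, q`, so the two mixed blocks coincide and give the factor `2`.
-/

open Complex MeasureTheory Finset Real
open scoped ComplexConjugate

theorem integral_cos_mul_exp_neg_mul_sq {a : ℝ} (ha : 0 < a) (b : ℝ) :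
    ∫ t : ℝ, Real.cos (b * t) * Real.exp (-a * t ^ 2) =
      √(π / a) * Real.exp (-b ^ 2 / (4 * a)) := by
  have ha' : 0 < (a : ℂ).re := by simpa using ha
  have hint : Integrable fun t : ℝ => cexp (I * b * t) * cexp (-a * t ^ 2) := by
    simpa [← Complex.exp_add, add_comm] using integrable_cexp_quadratic ha' (I * b) 0
  calc ∫ t : ℝ, Real.cos (b * t) * Real.exp (-a * t ^ 2)
      = ∫ t : ℝ, (cexp (I * b * t) * cexp (-a * t ^ 2)).re := by
        congr 1 with t
        rw [show I * b * t = ((b * t : ℝ) : ℂ) * I by push_cast; ring,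
          show -(a : ℂ) * t ^ 2 = ((-a * t ^ 2 : ℝ) : ℂ) by push_cast; ring, ← ofReal_exp,
          re_mul_ofReal, exp_ofReal_mul_I_re]
    _ = (∫ t : ℝ, cexp (I * b * t) * cexp (-a * t ^ 2)).re := integral_re hint
    _ = √(π / a) * Real.exp (-b ^ 2 / (4 * a)) := by
        rw [fourierIntegral_gaussian ha', show (π : ℂ) / a = ((π / a : ℝ) : ℂ) by push_cast; ring,
          show -(b : ℂ) ^ 2 / (4 * a) = ((-b ^ 2 / (4 * a) : ℝ) : ℂ) by push_cast; ring,
          ← ofReal_exp, re_mul_ofReal, ← ofReal_one, ← ofReal_ofNat, ← ofReal_div,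
          ← ofReal_cpow (by positivity), ofReal_re, Real.sqrt_eq_rpow, one_div]

theorem integrable_cos_mul_exp_neg_mul_sq {a : ℝ} (ha : 0 < a) (b : ℝ) :
    Integrable fun t : ℝ => Real.cos (b * t) * Real.exp (-a * t ^ 2) :=
  (integrable_exp_neg_mul_sq ha).bdd_mul (by fun_prop)
    (Filter.Eventually.of_forall fun t => Real.norm_eq_abs _ ▸ Real.abs_cos_le_one _)

theorem norm_sum_ofReal_mul_cexp_sq {ι : Type*} (s : Finset ι) (c y : ι → ℝ) (t : ℝ) :
    ‖∑ j ∈ s, (c j : ℂ) * cexp (I * t * y j)‖ ^ 2 =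
      ∑ j ∈ s, ∑ k ∈ s, c j * c k * Real.cos (t * (y j - y k)) := by
  rw [← ofReal_re (_ ^ 2), ofReal_pow, ← mul_conj', map_sum, sum_mul_sum]
  simp only [re_sum]
  refine sum_congr rfl fun j _ => sum_congr rfl fun k _ => ?_
  have hphase : I * t * y j + conj (I * t * y k) = ((t * (y j - y k) : ℝ) : ℂ) * I := by
    simp only [map_mul, conj_I, conj_ofReal]
    push_cast
    ring
  rw [map_mul, conj_ofReal, ← exp_conj, mul_mul_mul_comm, ← Complex.exp_add, hphase,
    ← ofReal_mul, re_ofReal_mul, exp_ofReal_mul_I_re]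

theorem integral_norm_sum_ofReal_mul_cexp_sq_mul_exp_neg_mul_sq {ι : Type*} (s : Finset ι)
    (c y : ι → ℝ) {a : ℝ} (ha : 0 < a) :
    ∫ t : ℝ, ‖∑ j ∈ s, (c j : ℂ) * cexp (I * t * y j)‖ ^ 2 * Real.exp (-a * t ^ 2) =
      √(π / a) * ∑ j ∈ s, ∑ k ∈ s, c j * c k * Real.exp (-(y j - y k) ^ 2 / (4 * a)) := by
  have hint (j k : ι) : Integrable fun t : ℝ =>
      c j * (c k * (Real.cos ((y j - y k) * t) * Real.exp (-a * t ^ 2))) :=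
    ((integrable_cos_mul_exp_neg_mul_sq ha _).const_mul _).const_mul _
  simp_rw [norm_sum_ofReal_mul_cexp_sq, sum_mul, mul_assoc, mul_comm _ (y _ - y _)]
  rw [integral_finsetSum _ fun j _ => integrable_finsetSum _ fun k _ => hint j k, mul_sum]
  refine sum_congr rfl fun j _ => ?_
  rw [integral_finsetSum _ fun k _ => hint j k, mul_sum]
  refine sum_congr rfl fun k _ => ?_
  rw [integral_const_mul, integral_const_mul, integral_cos_mul_exp_neg_mul_sq ha]
  ring

theorem Finset.sum_disjSum_sum_disjSum_of_symm {ι κ R : Type*} [CommSemiring R]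
    (s : Finset ι) (t : Finset κ) (K : ι ⊕ κ → ι ⊕ κ → R) (hK : ∀ p q, K p q = K q p) :
    ∑ p ∈ s.disjSum t, ∑ q ∈ s.disjSum t, K p q =
      ∑ j ∈ s, ∑ k ∈ s, K (.inl j) (.inl k) + 2 * ∑ j ∈ t, ∑ k ∈ s, K (.inr j) (.inl k) +
        ∑ j ∈ t, ∑ k ∈ t, K (.inr j) (.inr k) := by
  have hcross :
      ∑ j ∈ s, ∑ k ∈ t, K (.inl j) (.inr k) = ∑ j ∈ t, ∑ k ∈ s, K (.inr j) (.inl k) := by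
    rw [sum_comm]
    simp only [hK (.inl _)]
  simp only [sum_disjSum, sum_add_distrib, hcross]
  ring

theorem vStatistic_gaussian_eq_general (n m : ℕ) (hn : 1 ≤ n) (x : ℕ → ℝ) (a : ℝ) (ha : 0 < a) :
    (n : ℝ) * ∫ t : ℝ, ‖phiEmp n m x t - xiEmp n m x t‖ ^ 2 * Real.exp (-a * t ^ 2)
      = (n : ℝ)⁻¹ * Real.sqrt (Real.pi / a) *
          ∑ j ∈ Finset.Icc 1 n, ∑ k ∈ Finset.Icc 1 n,
            (Real.exp (-(x j ^ ((m : ℝ)⁻¹) - x k ^ ((m : ℝ)⁻¹)) ^ 2 / (4 * a))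
              - 2 * (n : ℝ) * vWeight n m j *
                  Real.exp (-(x j - x k ^ ((m : ℝ)⁻¹)) ^ 2 / (4 * a))
              + (n : ℝ) ^ 2 * vWeight n m j * vWeight n m k *
                  Real.exp (-(x j - x k) ^ 2 / (4 * a))) := by
  have hn0 : (n : ℂ) ≠ 0 := Nat.cast_ne_zero.2 (by omega)
  let c : ℕ ⊕ ℕ → ℝ := Sum.elim 1 fun j => -(n * vWeight n m j)
  let y : ℕ ⊕ ℕ → ℝ := Sum.elim (fun j => x j ^ (m : ℝ)⁻¹) x
  have hdiff (t : ℝ) : phiEmp n m x t - xiEmp n m x t =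
      (n : ℂ)⁻¹ * ∑ p ∈ (Icc 1 n).disjSum (Icc 1 n), (c p : ℂ) * cexp (I * t * y p) := by
    simp [phiEmp, xiEmp, c, y, sum_disjSum, mul_add, mul_sum, ← mul_assoc, inv_mul_cancel₀ hn0,
      sub_eq_add_neg]
  simp_rw [hdiff, norm_mul, norm_inv, Complex.norm_natCast, mul_pow, mul_assoc ((n : ℝ)⁻¹ ^ 2)]
  rw [integral_const_mul, integral_norm_sum_ofReal_mul_cexp_sq_mul_exp_neg_mul_sq _ _ _ ha,
    sum_disjSum_sum_disjSum_of_symm _ _ _ fun p q => by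
      rw [mul_comm (c p), ← neg_sub (y p), neg_sq], ← mul_assoc, ← mul_assoc,
    show (n : ℝ) * (n : ℝ)⁻¹ ^ 2 = (n : ℝ)⁻¹ by field_simp]
  congr 1
  simp only [c, y, Sum.elim_inl, Sum.elim_inr, Pi.one_apply, mul_sum, ← sum_add_distrib]
  refine sum_congr rfl fun j _ => sum_congr rfl fun k _ => ?_
  ring

/-- Computational form of the V-statistic `S_{n,m,a}` with the Gaussian kernel weight
`w̃_a(t) = exp (-a t²)`. -/
theorem vStatistic_gaussian_eq (n m : ℕ) (hn : 1 ≤ n) (hm : 1 ≤ m) (x : ℕ → ℝ)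
    (hmono : ∀ j k, 1 ≤ j → j ≤ k → k ≤ n → x j ≤ x k)
    (hx : ∀ j, 1 ≤ j → j ≤ n → 1 ≤ x j) (a : ℝ) (ha : 0 < a) :
    (n : ℝ) * ∫ t : ℝ, ‖phiEmp n m x t - xiEmp n m x t‖ ^ 2 * Real.exp (-a * t ^ 2)
      = (n : ℝ)⁻¹ * Real.sqrt (Real.pi / a) *
          ∑ j ∈ Finset.Icc 1 n, ∑ k ∈ Finset.Icc 1 n,
            (Real.exp (-(x j ^ ((m : ℝ)⁻¹) - x k ^ ((m : ℝ)⁻¹)) ^ 2 / (4 * a))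
              - 2 * (n : ℝ) * vWeight n m j *
                  Real.exp (-(x j - x k ^ ((m : ℝ)⁻¹)) ^ 2 / (4 * a))
              + (n : ℝ) ^ 2 * vWeight n m j * vWeight n m k *
                  Real.exp (-(x j - x k) ^ 2 / (4 * a))) :=
  vStatistic_gaussian_eq_general n m hn x a ha
end
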